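/- Let p, q be idempotents in a ring R. Then p - pq is Drazin invertible if and only if p - qp is Drazin invertible. -/
import Mathlib


variable {R : Type*} [Ring R]

def IsDrazinInverse (a b : R) : Prop :=
  a * b = b * a ∧ b * a * b = b ∧ ∃ k : ℕ, 0 < k ∧ a ^ k = a ^ (k + 1) * b

def IsDrazinInvertible (a : R) : Prop := ∃ b, IsDrazinInverse a b

private lemma pow_shift (a b : R) : ∀ m : ℕ, (b * a) ^ (m + 1) = b * (a * b) ^ m * a
  | 0 => by simp
  | m + 1 => by
    rw [pow_succ, pow_shift a b m, pow_succ]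
    simp only [mul_assoc]

private lemma cline {a b c : R} (h : IsDrazinInverse (a * b) c) :
    IsDrazinInverse (b * a) (b * (c * c) * a) := by
  obtain ⟨h1, h2, k, hk, h3⟩ := h
  have hcomm : Commute (a * b) c := h1
  have hcc : (a * b) * (c * c) = (c * c) * (a * b) := (hcomm.mul_right hcomm).eq
  have habc : (a * b) * (c * c) = c := by
    rw [← mul_assoc, h1, mul_assoc, ← mul_assoc, h2]
  have hcab : (c * c) * (a * b) = c := by rw [← hcc, habc]
  refine ⟨?_, ?_, k + 1, Nat.succ_pos k, ?_⟩
  · calc b * a * (b * (c * c) * a) = b * ((a * b) * (c * c)) * a := by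
          simp only [mul_assoc]
      _ = b * ((c * c) * (a * b)) * a := by rw [hcc]
      _ = b * (c * c) * a * (b * a) := by simp only [mul_assoc]
  · calc b * (c * c) * a * (b * a) * (b * (c * c) * a)
        = b * ((c * c) * (a * b) * ((a * b) * (c * c))) * a := by simp only [mul_assoc]
      _ = b * (c * c) * a := by rw [hcab, habc]
  · have key : (a * b) ^ (k + 1) * ((a * b) * (c * c)) = (a * b) ^ k := by
      rw [habc, ← h3]
    calc (b * a) ^ (k + 1) = b * (a * b) ^ k * a := pow_shift a b k
      _ = b * ((a * b) ^ (k + 1) * ((a * b) * (c * c))) * a := by rw [key]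
      _ = b * (a * b) ^ (k + 1) * a * (b * (c * c) * a) := by simp only [mul_assoc]
      _ = (b * a) ^ (k + 1 + 1) * (b * (c * c) * a) := by rw [pow_shift a b (k + 1)]

theorem stmt10 (p q : R) (hp : p ^ 2 = p) (hq : q ^ 2 = q) :
    IsDrazinInvertible (p - p * q) ↔ IsDrazinInvertible (p - q * p) := by
  have e1 : p - p * q = p * (1 - q) := by noncomm_ring
  have e2 : p - q * p = (1 - q) * p := by noncomm_ring
  rw [e1, e2]
  constructor
  · rintro ⟨c, hc⟩
    exact ⟨_, cline hc⟩
  · rintro ⟨c, hc⟩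
    exact ⟨_, cline hc⟩
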